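/- Let n, k, m be positive integers with 1 ≤ k ≤ n−2 and 1 ≤ m ≤ n−k−1. Then q(K→(n,k,m)) = (3n−m−4+sqrt((n−3m)^2+8mk))/2. -/

import Mathlib

open Matrix

namespace SignlessDigraph

variable {n : ℕ}

/-- Real adjacency matrix of a (multi)digraph on `Fin n`, given by arc multiplicities. -/
def adjMat (W : Fin n → Fin n → ℕ) : Matrix (Fin n) (Fin n) ℝ :=
  fun i j => (W i j : ℝ)

/-- Outdegree of a vertex. -/
def outdeg (W : Fin n → Fin n → ℕ) (i : Fin n) : ℕ := ∑ j, W i j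

/-- Indegree of a vertex. -/
def indeg (W : Fin n → Fin n → ℕ) (i : Fin n) : ℕ := ∑ j, W j i

/-- The signless Laplacian matrix `Q(D) = diag(outdegrees) + A(D)`. -/
noncomputable def Qmat (W : Fin n → Fin n → ℕ) : Matrix (Fin n) (Fin n) ℝ :=
  Matrix.diagonal (fun i => (outdeg W i : ℝ)) + adjMat W

/-- Spectral radius of a real matrix: the maximum modulus of its (complex) eigenvalues. -/
noncomputable def radius (M : Matrix (Fin n) (Fin n) ℝ) : ℝ :=
  sSup {r : ℝ | ∃ μ ∈ spectrum ℂ (M.map ((↑) : ℝ → ℂ)), r = ‖μ‖}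

/-- The signless Laplacian spectral radius `q(D)`. -/
noncomputable def q (W : Fin n → Fin n → ℕ) : ℝ := radius (Qmat W)

/-- The (adjacency) spectral radius `ρ(D)`. -/
noncomputable def rho (W : Fin n → Fin n → ℕ) : ℝ := radius (adjMat W)

/-- A digraph is simple: no loops and no multiple arcs. -/
def Simple (W : Fin n → Fin n → ℕ) : Prop :=
  (∀ i, W i i = 0) ∧ ∀ i j, W i j ≤ 1

/-- Strong connectivity: every vertex is reachable from every vertex by a directed path. -/
def StronglyConnected (W : Fin n → Fin n → ℕ) : Prop :=
  ∀ i j : Fin n, Relation.ReflTransGen (fun a b => W a b ≠ 0) i j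

/-- Isomorphism of digraphs on `Fin n`. -/
def Iso (W W' : Fin n → Fin n → ℕ) : Prop :=
  ∃ e : Fin n ≃ Fin n, ∀ i j, W (e i) (e j) = W' i j

/-- The clique number: maximum size of a set of vertices with all arcs in both directions. -/
noncomputable def cliqueNum (W : Fin n → Fin n → ℕ) : ℕ :=
  sSup {d : ℕ | ∃ s : Finset (Fin n), s.card = d ∧ ∀ i ∈ s, ∀ j ∈ s, i ≠ j → W i j ≠ 0}

/-- `W` has a directed cycle of length `c`. -/
def HasCycleLen (W : Fin n → Fin n → ℕ) (c : ℕ) : Prop :=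
  ∃ (hc : 2 ≤ c) (p : Fin c → Fin n), Function.Injective p ∧
    ∀ i : Fin c, W (p i) (p ⟨((i : ℕ) + 1) % c, Nat.mod_lt _ (by omega)⟩) ≠ 0

/-- The girth: length of a shortest directed cycle. -/
noncomputable def girth (W : Fin n → Fin n → ℕ) : ℕ := sInf {c | HasCycleLen W c}

/-- The complete digraph `K_n^↔`. -/
def Kcomp (n : ℕ) : Fin n → Fin n → ℕ := fun i j => if i = j then 0 else 1

/-- The directed cycle `C_n^→`, with arcs `i → i+1 (mod n)`. -/
def cyc (n : ℕ) : Fin n → Fin n → ℕ := fun i j => if (j : ℕ) = ((i : ℕ) + 1) % n then 1 else 0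

/-- The digraph `B_{n,d}` (for `2 ≤ d ≤ n-1`): a complete digraph on the vertices
`0, …, d-1` together with a directed path `0 → d → d+1 → ⋯ → n-1 → 1`
(the path `u_1 u_2 ⋯ u_{n-d+2}` with `u_1 = 0`, `u_{n-d+2} = 1`,
and internal vertices `d, …, n-1`). -/
def B (n d : ℕ) : Fin n → Fin n → ℕ := fun i j =>
  if i ≠ j ∧ (i : ℕ) < d ∧ (j : ℕ) < d then 1
  else if (i : ℕ) = 0 ∧ (j : ℕ) = d then 1
  else if d ≤ (i : ℕ) ∧ (j : ℕ) = (i : ℕ) + 1 then 1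
  else if (i : ℕ) = n - 1 ∧ (j : ℕ) = 1 then 1
  else 0

/-- `B'_{n,d} = B_{n,d} − (u_{n-d+1}, u_{n-d+2}) + (u_{n-d+1}, u_1)`, i.e. the arc
`n-1 → 1` is replaced by the arc `n-1 → 0`. -/
def B' (n d : ℕ) : Fin n → Fin n → ℕ := fun i j =>
  if (i : ℕ) = n - 1 ∧ (j : ℕ) = 1 then 0
  else if (i : ℕ) = n - 1 ∧ (j : ℕ) = 0 then 1
  else B n d i j

/-- The digraph `C_{n,g}` (for `2 ≤ g ≤ n-1`): vertices `u_1, …, u_n` are `0, …, n-1`,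
with arcs `i → i+1` for `0 ≤ i ≤ n-2` together with the arcs `g-1 → 0` and `n-1 → 0`. -/
def Cng (n g : ℕ) : Fin n → Fin n → ℕ := fun i j =>
  if (j : ℕ) = (i : ℕ) + 1 then 1
  else if ((i : ℕ) = g - 1 ∨ (i : ℕ) = n - 1) ∧ (j : ℕ) = 0 then 1
  else 0

/-- `C'_{n,g} = C_{n,g} − (u_n, u_1) + (u_n, u_g)`, i.e. the arc `n-1 → 0` is replaced by
the arc `n-1 → g-1`. -/
def Cng' (n g : ℕ) : Fin n → Fin n → ℕ := fun i j =>
  if (i : ℕ) = n - 1 ∧ (j : ℕ) = 0 then 0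
  else if (i : ℕ) = n - 1 ∧ (j : ℕ) = g - 1 then 1
  else Cng n g i j

/-- The θ-digraph `θ(a,b,c)` realized on `Fin n` (intended for `n = a + b + c + 2`):
vertex `0` is the common initial vertex of the paths `P_{a+2}`, `P_{b+2}` and terminal
vertex of `P_{c+2}`; vertex `1` is the common terminal vertex of `P_{a+2}`, `P_{b+2}`
and initial vertex of `P_{c+2}`; the internal vertices of the three paths are
`2, …, a+1`, `a+2, …, a+b+1` and `a+b+2, …, a+b+c+1` respectively. -/
def theta (n a b c : ℕ) : Fin n → Fin n → ℕ := fun i j =>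
  if ((a = 0 ∧ (i : ℕ) = 0 ∧ (j : ℕ) = 1) ∨
      (a ≠ 0 ∧ (((i : ℕ) = 0 ∧ (j : ℕ) = 2) ∨
        (2 ≤ (i : ℕ) ∧ (i : ℕ) ≤ a ∧ (j : ℕ) = (i : ℕ) + 1) ∨
        ((i : ℕ) = a + 1 ∧ (j : ℕ) = 1))) ∨
      (b = 0 ∧ (i : ℕ) = 0 ∧ (j : ℕ) = 1) ∨
      (b ≠ 0 ∧ (((i : ℕ) = 0 ∧ (j : ℕ) = a + 2) ∨
        (a + 2 ≤ (i : ℕ) ∧ (i : ℕ) ≤ a + b ∧ (j : ℕ) = (i : ℕ) + 1) ∨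
        ((i : ℕ) = a + b + 1 ∧ (j : ℕ) = 1))) ∨
      (c = 0 ∧ (i : ℕ) = 1 ∧ (j : ℕ) = 0) ∨
      (c ≠ 0 ∧ (((i : ℕ) = 1 ∧ (j : ℕ) = a + b + 2) ∨
        (a + b + 2 ≤ (i : ℕ) ∧ (i : ℕ) ≤ a + b + c ∧ (j : ℕ) = (i : ℕ) + 1) ∨
        ((i : ℕ) = a + b + c + 1 ∧ (j : ℕ) = 0))))
  then 1 else 0

/-- The digraph `K→(n,k,m)`: the vertex set is partitioned into
`V₁ = {0,…,m-1}`, `S = {m,…,m+k-1}`, `V₂ = {m+k,…,n-1}`; it is the complete digraph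
with all arcs from `V₂` to `V₁` removed. -/
def Kdir (n k m : ℕ) : Fin n → Fin n → ℕ := fun i j =>
  if i = j then 0
  else if m + k ≤ (i : ℕ) ∧ (j : ℕ) < m then 0
  else 1

/-- The digraph `D_{uv}` obtained from `D` by deleting the arc `(u,v)`, identifying `u`
with `v` (the merged vertex is `v`; the vertex `u` becomes isolated) and deleting
multiple arcs (and loops). -/
def contract (W : Fin n → Fin n → ℕ) (u v : Fin n) : Fin n → Fin n → ℕ :=
  fun i j =>
    if i = u ∨ j = u ∨ i = j then 0
    else if i = v then min 1 (W v j + W u j)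
    else if j = v then min 1 (W i v + W i u)
    else min 1 (W i j)

/-- The digraph `D^w` obtained from `D` by subdividing the arc `(u,v)` with a new
vertex `w` (realized as the last vertex of `Fin (n+1)`). -/
def subdivide (W : Fin n → Fin n → ℕ) (u v : Fin n) : Fin (n + 1) → Fin (n + 1) → ℕ :=
  fun i j =>
    if hi : (i : ℕ) < n then
      if hj : (j : ℕ) < n then
        if (⟨(i : ℕ), hi⟩ : Fin n) = u ∧ (⟨(j : ℕ), hj⟩ : Fin n) = v then 0
        else W ⟨(i : ℕ), hi⟩ ⟨(j : ℕ), hj⟩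
      else if (⟨(i : ℕ), hi⟩ : Fin n) = u then 1 else 0
    else
      if hj : (j : ℕ) < n then (if (⟨(j : ℕ), hj⟩ : Fin n) = v then 1 else 0)
      else 0

/-!
`Q(K→(n,k,m))` has a positive eigenvector that is constant on `V₁ ∪ S` and on `V₂`, so its
eigenvalue is the largest eigenvalue of the 2 × 2 quotient matrix
`[[n+m+k-2, n-m-k], [k, 2n-2m-k-2]]`, which is the claimed value. For a nonnegative matrix a
positive eigenvector forces its eigenvalue to be the spectral radius: comparing an arbitrary
eigenvector `v` with it at a coordinate maximizing `‖vᵢ‖ / uᵢ` bounds every eigenvalue.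
-/

theorem _root_.Matrix.mem_spectrum_iff_exists_mulVec_eq_smul {ι K : Type*} [Fintype ι]
    [DecidableEq ι] [Field K] (A : Matrix ι ι K) (μ : K) :
    μ ∈ spectrum K A ↔ ∃ v : ι → K, v ≠ 0 ∧ A *ᵥ v = μ • v := by
  rw [← Matrix.spectrum_toLin', ← Module.End.hasEigenvalue_iff_mem_spectrum]
  constructor
  · intro h
    obtain ⟨v, hv⟩ := h.exists_hasEigenvector
    exact ⟨v, hv.2, by simpa using hv.apply_eq_smul⟩
  · rintro ⟨v, hv0, hv⟩
    exact Module.End.hasEigenvalue_of_hasEigenvector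
      ⟨by simpa [Module.End.mem_eigenspace_iff] using hv, hv0⟩

section PositiveEigenvector

variable {ι : Type*} [Fintype ι] [DecidableEq ι] {M : Matrix ι ι ℝ} {u : ι → ℝ} {r : ℝ}

theorem norm_le_of_mulVec_eq_smul_of_pos (hM : ∀ i j, 0 ≤ M i j) (hu : ∀ i, 0 < u i)
    (hMu : M *ᵥ u = r • u) {μ : ℂ} (hμ : μ ∈ spectrum ℂ (M.map ((↑) : ℝ → ℂ))) : ‖μ‖ ≤ r := by
  obtain ⟨v, hv0, hv⟩ := (Matrix.mem_spectrum_iff_exists_mulVec_eq_smul _ μ).1 hμ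
  obtain ⟨j₀, hj₀⟩ := Function.ne_iff.1 hv0
  obtain ⟨i, -, hi⟩ := Finset.exists_max_image Finset.univ (fun j => ‖v j‖ / u j) ⟨j₀, by simp⟩
  set c := ‖v i‖ / u i
  have hc : 0 < c :=
    (div_pos (norm_pos_iff.2 hj₀) (hu j₀)).trans_le (hi j₀ (Finset.mem_univ _))
  have hv_le : ∀ j, ‖v j‖ ≤ c * u j := fun j =>
    (div_le_iff₀ (hu j)).1 (hi j (Finset.mem_univ _))
  have hvi : ‖v i‖ = c * u i := (div_mul_cancel₀ _ (hu i).ne').symm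
  have key : ‖μ‖ * (c * u i) ≤ r * (c * u i) :=
    calc ‖μ‖ * (c * u i) = ‖∑ j, (M i j : ℂ) * v j‖ := by
          rw [← hvi, ← norm_mul, ← smul_eq_mul, ← Pi.smul_apply μ v, ← hv]; rfl
      _ ≤ ∑ j, M i j * (c * u j) := by
          refine (norm_sum_le _ _).trans (Finset.sum_le_sum fun j _ => ?_)
          rw [norm_mul, Complex.norm_real, Real.norm_of_nonneg (hM i j)]
          exact mul_le_mul_of_nonneg_left (hv_le j) (hM i j)
      _ = c * (M *ᵥ u) i := by
          rw [Matrix.mulVec, dotProduct, Finset.mul_sum]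
          exact Finset.sum_congr rfl fun j _ => by ring
      _ = r * (c * u i) := by rw [hMu, Pi.smul_apply, smul_eq_mul]; ring
  exact le_of_mul_le_mul_right key (mul_pos hc (hu i))

theorem ofReal_mem_spectrum_of_mulVec_eq_smul_of_pos [Nonempty ι] (hu : ∀ i, 0 < u i)
    (hMu : M *ᵥ u = r • u) : (r : ℂ) ∈ spectrum ℂ (M.map ((↑) : ℝ → ℂ)) := by
  refine (Matrix.mem_spectrum_iff_exists_mulVec_eq_smul _ _).2
    ⟨fun j => (u j : ℂ), fun h => ?_, funext fun i => ?_⟩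
  · obtain ⟨i⟩ := ‹Nonempty ι›
    exact (hu i).ne' (Complex.ofReal_eq_zero.1 (congrFun h i))
  · have := Complex.ofRealHom.map_mulVec M u i
    simp_all [Complex.ofRealHom, Function.comp_def]

end PositiveEigenvector

theorem radius_eq_of_mulVec_eq_smul_of_pos (hn : 0 < n) {M : Matrix (Fin n) (Fin n) ℝ}
    {u : Fin n → ℝ} {r : ℝ} (hM : ∀ i j, 0 ≤ M i j) (hu : ∀ i, 0 < u i)
    (hMu : M *ᵥ u = r • u) : radius M = r := by
  have : Nonempty (Fin n) := ⟨⟨0, hn⟩⟩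
  have hr : 0 ≤ r := by
    have h := congrFun hMu ⟨0, hn⟩
    rw [Pi.smul_apply, smul_eq_mul] at h
    refine nonneg_of_mul_nonneg_left ?_ (hu ⟨0, hn⟩)
    rw [← h, Matrix.mulVec, dotProduct]
    exact Finset.sum_nonneg fun j _ => mul_nonneg (hM _ j) (hu j).le
  have hmem : r ∈ {s : ℝ | ∃ μ ∈ spectrum ℂ (M.map ((↑) : ℝ → ℂ)), s = ‖μ‖} :=
    ⟨r, ofReal_mem_spectrum_of_mulVec_eq_smul_of_pos hu hMu, by simp [abs_of_nonneg hr]⟩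
  have hub : r ∈ upperBounds {s : ℝ | ∃ μ ∈ spectrum ℂ (M.map ((↑) : ℝ → ℂ)), s = ‖μ‖} := by
    rintro s ⟨μ, hμ, rfl⟩
    exact norm_le_of_mulVec_eq_smul_of_pos hM hu hMu hμ
  exact IsGreatest.csSup_eq ⟨hmem, hub⟩

theorem Qmat_nonneg (W : Fin n → Fin n → ℕ) (i j : Fin n) : 0 ≤ Qmat W i j := by
  simp only [Qmat, adjMat, Matrix.add_apply, Matrix.diagonal_apply]
  split_ifs <;> positivity

theorem Qmat_mulVec_apply (W : Fin n → Fin n → ℕ) (w : Fin n → ℝ) (i : Fin n) :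
    (Qmat W *ᵥ w) i = outdeg W i * w i + ∑ j, (W i j : ℝ) * w j := by
  rw [Qmat, Matrix.add_mulVec, Pi.add_apply, Matrix.mulVec_diagonal]
  rfl

theorem sum_fin_ite_lt {c : ℕ} (hc : c ≤ n) (x y : ℝ) :
    ∑ j : Fin n, (if (j : ℕ) < c then x else y) = c * x + ((n : ℝ) - c) * y := by
  rw [Finset.sum_ite, Finset.sum_const, Finset.sum_const, Finset.filter_not,
    Finset.card_univ_sdiff, Fin.card_filter_val_lt, Fintype.card_fin, min_eq_right hc,
    nsmul_eq_mul, nsmul_eq_mul, Nat.cast_sub hc]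

theorem sum_Kdir_mul (k m : ℕ) (w : Fin n → ℝ) (i : Fin n) :
    ∑ j, (Kdir n k m i j : ℝ) * w j =
      ∑ j, w j - (if m + k ≤ (i : ℕ) then ∑ j : Fin n, if (j : ℕ) < m then w j else 0 else 0)
        - w i := by
  have hterm : ∀ j, (Kdir n k m i j : ℝ) * w j = w j
      - (if m + k ≤ (i : ℕ) then (if (j : ℕ) < m then w j else 0) else 0)
      - (if i = j then w j else 0) := by
    intro j
    by_cases hij : i = j
    · subst hij; simp only [Kdir, if_true]; split_ifs <;> first | omega | simp
    · simp only [Kdir, hij, if_false]; split_ifs <;> simp_all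
  simp only [hterm, Finset.sum_sub_distrib, Finset.sum_ite_eq, Finset.mem_univ, if_true]
  split_ifs <;> simp

theorem Qmat_Kdir_mulVec_block {k m : ℕ} (h : m + k ≤ n) (x y : ℝ) (i : Fin n) :
    (Qmat (Kdir n k m) *ᵥ fun j => if (j : ℕ) < m + k then x else y) i =
      if (i : ℕ) < m + k then (n + m + k - 2) * x + (n - m - k) * y
      else k * x + (2 * n - 2 * m - k - 2) * y := by
  have hdeg : (outdeg (Kdir n k m) i : ℝ) = ∑ j, (Kdir n k m i j : ℝ) * 1 := by
    simp [outdeg]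
  have hV₁ : ∀ z : ℝ, (∑ j : Fin n, if (j : ℕ) < m then z else 0) = m * z := fun z => by
    rw [sum_fin_ite_lt (by omega)]; ring
  have hV₁' : (∑ j : Fin n, if (j : ℕ) < m then (if (j : ℕ) < m + k then x else y) else 0)
      = m * x := by
    rw [← hV₁]; refine Finset.sum_congr rfl fun j _ => ?_; split_ifs <;> first | rfl | omega
  rw [Qmat_mulVec_apply, hdeg, sum_Kdir_mul, sum_Kdir_mul, sum_fin_ite_lt h, hV₁, hV₁']
  simp only [Finset.sum_const, Finset.card_univ, Fintype.card_fin, nsmul_eq_mul]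
  push_cast [Nat.cast_sub h]
  split_ifs <;> first | omega | ring

theorem exists_pos_two_by_two_eigenvector (a b c d : ℝ) (hb : 0 < b) (hc : 0 < c) :
    ∃ z, 0 < z ∧ a + b * z = (a + d + √((a - d) ^ 2 + 4 * b * c)) / 2 ∧
      c + d * z = (a + d + √((a - d) ^ 2 + 4 * b * c)) / 2 * z := by
  set s := √((a - d) ^ 2 + 4 * b * c)
  have hs : s ^ 2 = (a - d) ^ 2 + 4 * b * c := Real.sq_sqrt (by positivity)
  have hs_gt : a - d < s := by nlinarith [Real.sqrt_nonneg ((a - d) ^ 2 + 4 * b * c), mul_pos hb hc]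
  refine ⟨(d - a + s) / (2 * b), div_pos (by linarith) (by linarith), ?_, ?_⟩
  · field_simp; ring
  · field_simp; linear_combination (-1) * hs

theorem q_Kdir_general {n k m : ℕ} (hk : 1 ≤ k) (hkn : k ≤ n - 2)
    (hmn : m ≤ n - k - 1) :
    q (Kdir n k m) =
      (3 * (n : ℝ) - (m : ℝ) - 4 +
          Real.sqrt (((n : ℝ) - 3 * (m : ℝ)) ^ 2 + 8 * (m : ℝ) * (k : ℝ))) / 2 := by
  have hmk : m + k < n := by omega
  obtain ⟨z, hz, hV₁S, hV₂⟩ := exists_pos_two_by_two_eigenvector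
    (n + m + k - 2) (n - m - k) k (2 * n - 2 * m - k - 2)
    (by rw [sub_sub, sub_pos]; exact_mod_cast hmk) (by positivity)
  have hL : ((n + m + k - 2 : ℝ) + (2 * n - 2 * m - k - 2) +
      √(((n + m + k - 2 : ℝ) - (2 * n - 2 * m - k - 2)) ^ 2 + 4 * (n - m - k) * k)) / 2 =
      (3 * (n : ℝ) - m - 4 + √(((n : ℝ) - 3 * m) ^ 2 + 8 * m * k)) / 2 := by
    ring_nf
  rw [hL] at hV₁S hV₂
  refine radius_eq_of_mulVec_eq_smul_of_pos (by omega) (Qmat_nonneg _)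
    (u := fun j => if (j : ℕ) < m + k then 1 else z)
    (fun j => by split_ifs <;> positivity) (funext fun i => ?_)
  rw [Qmat_Kdir_mulVec_block hmk.le, Pi.smul_apply, smul_eq_mul]
  split_ifs <;> linarith

/-- For `1 ≤ k ≤ n-2` and `1 ≤ m ≤ n-k-1`,
`q(K→(n,k,m)) = (3n-m-4+√((n-3m)²+8mk))/2`. -/
theorem q_Kdir {n k m : ℕ} (hk : 1 ≤ k) (hkn : k ≤ n - 2) (hm : 1 ≤ m)
    (hmn : m ≤ n - k - 1) :
    q (Kdir n k m) =
      (3 * (n : ℝ) - (m : ℝ) - 4 +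
          Real.sqrt (((n : ℝ) - 3 * (m : ℝ)) ^ 2 + 8 * (m : ℝ) * (k : ℝ))) / 2 :=
  q_Kdir_general hk hkn hmn

end SignlessDigraph
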